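/- For perfect transmission T = 1, there exists α > 0 such that 2·√(c₁(α,1)² + erf(α/√2)²) > 2.28; that is, in the Bell test with two homodyne measurements on the light mode, the optimized CHSH value exceeds 2.28. -/

import Mathlib

/-!
Take `α = 8√2/5`, so that the homodyne frequency `C = √2·α = 16/5` is rational and
`α/√2 = 8/5`. On the bin `|x| ≤ π/(2C)` the cosine is nonnegative, so `e^{-x²} ≥ 1 - x²`
bounds the binned integral below by `∫ (1 - x²) cos(Cx) = (2/C)(1 - π²/(4C²) + 2/C²)`, giving
`c₁ > 0.595`. The Taylor polynomials of `e^{-u}` alternate around it for `u ≥ 0` (their error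
has derivative minus the previous error), which bounds `e^{-α²/2}` above and, integrated at
`u = t²`, gives `erf(8/5) > 0.976`. Then `c₁² + c₂² > 1.14²`.
-/

open Real

/-- Error function `erf x = (2/√π)·∫₀ˣ e^{−t²} dt`. -/
noncomputable def erf (x : ℝ) : ℝ :=
  (2 / Real.sqrt π) * ∫ t in (0 : ℝ)..x, Real.exp (-t ^ 2)

/-- Homodyne binning parameter at transmission `T`: `b = π/(2√2·√T·α)`. -/
noncomputable def bT (α T : ℝ) : ℝ := π / (2 * Real.sqrt 2 * (Real.sqrt T * α))

/-- Homodyne interference coefficient at transmission `T`: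
`c₁(α,T) = e^{−(1−T)α²/2}·[(2/√π)·∫_{−b}^{b} e^{−x²} cos(√2 x √T α) dx − e^{−Tα²/2}]`. -/
noncomputable def c1T (α T : ℝ) : ℝ :=
  Real.exp (-(1 - T) * α ^ 2 / 2) *
    ((2 / Real.sqrt π) *
        (∫ x in (-bT α T)..(bT α T),
          Real.exp (-x ^ 2) * Real.cos (Real.sqrt 2 * x * (Real.sqrt T * α)))
      - Real.exp (-T * α ^ 2 / 2))

open Finset
open scoped Nat

theorem hasDerivAt_exp_neg_sub_sum_range_succ (n : ℕ) (u : ℝ) :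
    HasDerivAt (fun v => exp (-v) - ∑ i ∈ range (n + 1), (-v) ^ i / i !)
      (-(exp (-u) - ∑ i ∈ range n, (-u) ^ i / i !)) u := by
  have hterm : ∀ i ∈ range n, HasDerivAt (fun v : ℝ => (-v) ^ (i + 1) / (i + 1)!)
      (-((-u) ^ i / i !)) u := fun i _ => by
    refine (((hasDerivAt_pow (i + 1) (-u)).comp u (hasDerivAt_neg u)).div_const _).congr_deriv ?_
    rw [Nat.factorial_succ, Nat.cast_mul, Nat.add_sub_cancel]
    field_simp
  have hsum := (HasDerivAt.fun_sum hterm).add_const 1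
  simp only [sum_range_succ' _ n, pow_zero, Nat.factorial_zero, Nat.cast_one, div_one]
  refine ((hasDerivAt_neg u).exp.sub hsum).congr_deriv ?_
  simp only [sum_neg_distrib]
  ring

theorem neg_one_pow_mul_exp_neg_sub_sum_nonneg (n : ℕ) {u : ℝ} (hu : 0 ≤ u) :
    0 ≤ (-1) ^ n * (exp (-u) - ∑ i ∈ range n, (-u) ^ i / i !) := by
  induction n generalizing u with
  | zero => simpa using (exp_pos (-u)).le
  | succ n ih =>
    let g := fun v => (-1) ^ (n + 1) * (exp (-v) - ∑ i ∈ range (n + 1), (-v) ^ i / i !)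
    have hg : ∀ v, HasDerivAt g ((-1) ^ n * (exp (-v) - ∑ i ∈ range n, (-v) ^ i / i !)) v :=
      fun v => ((hasDerivAt_exp_neg_sub_sum_range_succ n v).const_mul _).congr_deriv (by ring)
    have hmono : MonotoneOn g (Set.Ici 0) :=
      monotoneOn_of_hasDerivWithinAt_nonneg (convex_Ici 0)
        (fun v _ => (hg v).continuousAt.continuousWithinAt)
        (fun v _ => (hg v).hasDerivWithinAt)
        (fun v hv => ih (interior_subset hv))
    have hg0 : g 0 = 0 := by simp [g, sum_range_succ']
    simpa [hg0] using hmono Set.self_mem_Ici hu hu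

theorem sum_range_le_exp_neg_of_even {n : ℕ} (hn : Even n) {u : ℝ} (hu : 0 ≤ u) :
    ∑ i ∈ range n, (-u) ^ i / i ! ≤ exp (-u) := by
  simpa [hn.neg_one_pow] using neg_one_pow_mul_exp_neg_sub_sum_nonneg n hu

theorem exp_neg_le_sum_range_of_odd {n : ℕ} (hn : Odd n) {u : ℝ} (hu : 0 ≤ u) :
    exp (-u) ≤ ∑ i ∈ range n, (-u) ^ i / i ! := by
  simpa [hn.neg_one_pow] using neg_one_pow_mul_exp_neg_sub_sum_nonneg n hu

theorem integral_one_sub_sq_mul_cos {C : ℝ} (hC : C ≠ 0) :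
    ∫ x in -(π / (2 * C))..π / (2 * C), (1 - x ^ 2) * cos (C * x)
      = 2 / C * (1 - (π / (2 * C)) ^ 2 + 2 / C ^ 2) := by
  have hF : ∀ x, HasDerivAt
      (fun y => (1 - y ^ 2 + 2 / C ^ 2) * sin (C * y) / C - 2 * y * cos (C * y) / C ^ 2)
      ((1 - x ^ 2) * cos (C * x)) x := fun x => by
    have hlin : HasDerivAt (fun y => C * y) C x := by
      simpa using (hasDerivAt_id x).const_mul C
    have hpoly := ((hasDerivAt_pow 2 x).const_sub 1).add_const (2 / C ^ 2)
    have hlinear := (hasDerivAt_id' x).const_mul 2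
    refine ((hpoly.mul hlin.sin).div_const C |>.sub
      ((hlinear.mul hlin.cos).div_const (C ^ 2))).congr_deriv ?_
    field_simp
    ring
  rw [intervalIntegral.integral_eq_sub_of_hasDerivAt (fun x _ => hF x)
    (by apply Continuous.intervalIntegrable; fun_prop)]
  have hb : C * (π / (2 * C)) = π / 2 := by field_simp
  simp only [mul_neg, hb, sin_neg, cos_neg, sin_pi_div_two, cos_pi_div_two]
  ring

theorem integral_one_sub_sq_mul_cos_le_integral_exp_mul_cos {C : ℝ} (hC : 0 < C) :
    ∫ x in -(π / (2 * C))..π / (2 * C), (1 - x ^ 2) * cos (C * x)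
      ≤ ∫ x in -(π / (2 * C))..π / (2 * C), exp (-x ^ 2) * cos (C * x) := by
  have hb : 0 ≤ π / (2 * C) := by positivity
  refine intervalIntegral.integral_mono_on (by linarith)
    (by apply Continuous.intervalIntegrable; fun_prop)
    (by apply Continuous.intervalIntegrable; fun_prop) fun x hx => ?_
  have hCb : C * (π / (2 * C)) = π / 2 := by field_simp
  have hcos : 0 ≤ cos (C * x) := cos_nonneg_of_mem_Icc
    ⟨by linarith [mul_le_mul_of_nonneg_left hx.1 hC.le],
      by linarith [mul_le_mul_of_nonneg_left hx.2 hC.le]⟩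
  have hexp : 1 - x ^ 2 ≤ exp (-x ^ 2) := by linarith [add_one_le_exp (-x ^ 2)]
  exact mul_le_mul_of_nonneg_right hexp hcos

theorem c1T_one (α : ℝ) :
    c1T α 1 = 2 / √π * (∫ x in -(π / (2 * (√2 * α)))..π / (2 * (√2 * α)),
      exp (-x ^ 2) * cos (√2 * α * x)) - exp (-(α ^ 2 / 2)) := by
  simp only [c1T, bT, sqrt_one, one_mul, sub_self, neg_zero, zero_mul, zero_div, exp_zero,
    mul_assoc, neg_mul, neg_div]
  congr! 4 with x
  rw [mul_comm x α]

theorem sum_range_le_erf {n : ℕ} (hn : Even n) {x : ℝ} (hx : 0 ≤ x) :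
    2 / √π * ∑ i ∈ range n, (-1) ^ i * x ^ (2 * i + 1) / ((2 * i + 1) * i !) ≤ erf x := by
  have hsum : ∫ t in (0 : ℝ)..x, ∑ i ∈ range n, (-t ^ 2) ^ i / i !
      = ∑ i ∈ range n, (-1) ^ i * x ^ (2 * i + 1) / ((2 * i + 1) * i !) := by
    rw [intervalIntegral.integral_finsetSum fun i _ => by
      apply Continuous.intervalIntegrable; fun_prop]
    refine sum_congr rfl fun i _ => ?_
    simp_rw [neg_pow (_ ^ 2), ← pow_mul]
    rw [intervalIntegral.integral_div, intervalIntegral.integral_const_mul, integral_pow]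
    push_cast
    field_simp
    ring
  rw [erf, ← hsum]
  gcongr
  refine intervalIntegral.integral_mono_on hx
    (by apply Continuous.intervalIntegrable; fun_prop)
    (by apply Continuous.intervalIntegrable; fun_prop) fun t _ => ?_
  exact sum_range_le_exp_neg_of_even hn (sq_nonneg t)

theorem two_div_sqrt_pi_gt : (1.12835 : ℝ) < 2 / √π := by
  have hsqrt : √π < 1.77246 := by
    rw [sqrt_lt' (by norm_num)]
    linarith [pi_lt_d4]
  rw [lt_div_iff₀ (sqrt_pos.2 pi_pos)]
  linarith

theorem erf_eight_fifths_gt : (0.976 : ℝ) < erf (8 / 5) := by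
  have h := sum_range_le_erf (n := 10) (by decide) (x := 8 / 5) (by norm_num)
  norm_num [sum_range_succ, Nat.factorial] at h
  nlinarith [two_div_sqrt_pi_gt]

theorem c1T_eight_fifths_sqrt_two_gt : (0.595 : ℝ) < c1T (8 / 5 * √2) 1 := by
  have hsq : √2 ^ 2 = 2 := sq_sqrt zero_le_two
  have hC : √2 * (8 / 5 * √2) = 16 / 5 := by linear_combination 8 / 5 * hsq
  have hα : (8 / 5 * √2) ^ 2 / 2 = 64 / 25 := by linear_combination 32 / 25 * hsq
  rw [c1T_one, hC, hα]
  have hJ := (integral_one_sub_sq_mul_cos (C := 16 / 5) (by norm_num)).symm.trans_le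
    (integral_one_sub_sq_mul_cos_le_integral_exp_mul_cos (by norm_num))
  have hexp := exp_neg_le_sum_range_of_odd (n := 11) (by decide) (u := 64 / 25) (by norm_num)
  norm_num [sum_range_succ, Nat.factorial] at hexp
  have hJ' : (0.5964 : ℝ) < ∫ x in -(π / (2 * (16 / 5)))..π / (2 * (16 / 5)),
      exp (-x ^ 2) * cos (16 / 5 * x) := by
    have hπ := pow_lt_pow_left₀ pi_lt_d4 pi_pos.le two_ne_zero
    norm_num at hJ hπ ⊢
    linarith
  nlinarith [two_div_sqrt_pi_gt]

/-- At perfect transmission `T = 1`, the two-homodyne Bell test achieves an optimized CHSH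
value `2√(c₁² + c₂²) > 2.28` for some amplitude `α > 0`, with `c₂ = erf(α/√2)`. -/
theorem two_homodyne_violation_perfect_transmission :
    ∃ α > (0 : ℝ),
      2 * Real.sqrt ((c1T α 1) ^ 2 + (erf (α / Real.sqrt 2)) ^ 2) > 2.28 := by
  refine ⟨8 / 5 * √2, by positivity, ?_⟩
  have hx : 8 / 5 * √2 / √2 = 8 / 5 := by field_simp
  rw [hx]
  have hsqrt : 1.14 < √(c1T (8 / 5 * √2) 1 ^ 2 + erf (8 / 5) ^ 2) := by
    rw [lt_sqrt (by norm_num)]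
    nlinarith [c1T_eight_fifths_sqrt_two_gt, erf_eight_fifths_gt]
  linarith
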